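/- arXiv:2005.04571 — 4 statements merged into one kernel-verified Lean document; each statement's English description precedes it below -/
import Mathlib

section
/- Let D > 0 be the (fixed) total network stake, R > 0 the block reward, α ∈ [0,1] the pool fee, c > 0 the pool cost parameter, C > 0 the self-mining operational cost, and B > 0 the stakeholder's budget. Define the stakeholder's payoff for strategy (p,m) with p, m ≥ 0 and p + m ≤ B as U(p,m) = (m + p(1−α))R/D − (c·exp(−p) if p > 0 else 0) − (C if m > 0 else 0). Then for every feasible strategy (p,m) with (p,m) ∉ {(B,0), (0,B), (0,0)}, one has max(U(B,0), U(0,B)) > U(p,m); i.e., a stakeholder's best response is to invest all of its budget either to the pool or to self-mining. (Theorem 3.) -/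
/-!
With both `p, m > 0`, moving the pool stake to self-mining loses no reward (since `1 - α ≤ 1`)
and saves the pool cost `c e^{-p} > 0`, while the operational cost `C` is paid either way.
With `m = 0`, raising `p` to `B` raises the reward and lowers `c e^{-p}`; with `p = 0`, raising
`m` to `B` raises the reward at the same cost `C`.
-/

open Real

noncomputable def payoff (D R α c C p m : ℝ) : ℝ :=
  (m + p * (1 - α)) * R / D - (if 0 < p then c * exp (-p) else 0) - (if 0 < m then C else 0)

section

variable {D R α c C : ℝ}

theorem payoff_lt_payoff_all_self_of_split (hD : 0 ≤ D) (hR : 0 ≤ R) (hα0 : 0 ≤ α)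
    (hc : 0 < c) {p m B : ℝ} (hp : 0 < p) (hm : 0 < m) (hpm : p + m ≤ B) :
    payoff D R α c C p m < payoff D R α c C 0 B := by
  have hreward : (m + p * (1 - α)) * R / D ≤ (B + 0 * (1 - α)) * R / D := by
    gcongr ?_ * _ / _
    nlinarith
  have hcost : 0 < c * exp (-p) := by positivity
  simp only [payoff, if_pos hp, if_pos hm, lt_irrefl, if_false, if_pos (by linarith : 0 < B)]
  linarith

theorem payoff_pool_lt_payoff_pool_of_lt (hD : 0 ≤ D) (hR : 0 ≤ R) (hα1 : α ≤ 1)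
    (hc : 0 < c) {p q : ℝ} (hp : 0 < p) (hpq : p < q) :
    payoff D R α c C p 0 < payoff D R α c C q 0 := by
  have hreward : (0 + p * (1 - α)) * R / D ≤ (0 + q * (1 - α)) * R / D := by
    have : 0 ≤ 1 - α := by linarith
    gcongr
  have hcost : c * exp (-q) < c * exp (-p) := by gcongr
  simp only [payoff, if_pos hp, if_pos (hp.trans hpq), lt_irrefl, if_false]
  linarith

theorem payoff_self_lt_payoff_self_of_lt (hD : 0 < D) (hR : 0 < R) {m n : ℝ} (hm : 0 < m)
    (hmn : m < n) :
    payoff D R α c C 0 m < payoff D R α c C 0 n := by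
  have hreward : (m + 0 * (1 - α)) * R / D < (n + 0 * (1 - α)) * R / D := by
    gcongr
  simp only [payoff, if_pos hm, if_pos (hm.trans hmn), lt_irrefl, if_false]
  linarith

end

theorem stake_pool_best_response_all_in_general
    (D R α c C B : ℝ) (hD : 0 < D) (hR : 0 < R) (hα0 : 0 ≤ α) (hα1 : α ≤ 1)
    (hc : 0 < c)
    (U : ℝ → ℝ → ℝ)
    (hU : ∀ p m, U p m = (m + p * (1 - α)) * R / D -
        (if 0 < p then c * Real.exp (-p) else 0) - (if 0 < m then C else 0)) :
    ∀ p m : ℝ, 0 ≤ p → 0 ≤ m → p + m ≤ B →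
      (p, m) ≠ (B, 0) → (p, m) ≠ (0, B) → (p, m) ≠ (0, 0) →
      max (U B 0) (U 0 B) > U p m := by
  intro p m hp hm hpm hne_pool hne_self hne_zero
  obtain rfl : U = payoff D R α c C := funext fun p => funext fun m => hU p m
  rcases hp.lt_or_eq with hp | rfl
  · rcases hm.lt_or_eq with hm | rfl
    · exact lt_max_of_lt_right (payoff_lt_payoff_all_self_of_split hD.le hR.le hα0 hc hp hm hpm)
    · have hpB : p < B :=
        (by simpa using hpm : p ≤ B).lt_of_ne (by rintro rfl; exact hne_pool rfl)
      exact lt_max_of_lt_left (payoff_pool_lt_payoff_pool_of_lt hD.le hR.le hα1 hc hp hpB)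
  · have hm0 : 0 < m := hm.lt_of_ne (by rintro rfl; exact hne_zero rfl)
    have hmB : m < B := (by simpa using hpm : m ≤ B).lt_of_ne (by rintro rfl; exact hne_self rfl)
    exact lt_max_of_lt_right (payoff_self_lt_payoff_self_of_lt hD hR hm0 hmB)

/-- Theorem 3: with fixed total network stake `D > 0`, block reward `R > 0`,
pool fee `α ∈ [0,1]`, pool cost parameter `c > 0`, self-mining operational cost
`C > 0`, and budget `B > 0`, a stakeholder's payoff for a feasible strategy
`(p, m)` (with `p, m ≥ 0` and `p + m ≤ B`) is
`U p m = (m + p * (1 - α)) * R / D - (if 0 < p then c * exp (-p) else 0)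
        - (if 0 < m then C else 0)`.
Then every feasible strategy other than `(B, 0)`, `(0, B)` and `(0, 0)` is strictly
dominated by one of the two full-budget pure strategies:
`max (U B 0) (U 0 B) > U p m`. -/
theorem stake_pool_best_response_all_in
    (D R α c C B : ℝ) (hD : 0 < D) (hR : 0 < R) (hα0 : 0 ≤ α) (hα1 : α ≤ 1)
    (hc : 0 < c) (hC : 0 < C) (hB : 0 < B)
    (U : ℝ → ℝ → ℝ)
    (hU : ∀ p m, U p m = (m + p * (1 - α)) * R / D -
        (if 0 < p then c * Real.exp (-p) else 0) - (if 0 < m then C else 0)) :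
    ∀ p m : ℝ, 0 ≤ p → 0 ≤ m → p + m ≤ B →
      (p, m) ≠ (B, 0) → (p, m) ≠ (0, B) → (p, m) ≠ (0, 0) →
      max (U B 0) (U 0 B) > U p m :=
  stake_pool_best_response_all_in_general D R α c C B hD hR hα0 hα1 hc U hU
end

section
/- Let D > 0 be the (fixed) total network stake, R > 0 the block reward, α ∈ [0,1] the pool fee, c > 0 the pool cost parameter, C > 0 the self-mining operational cost, and B > 0 the stakeholder's budget, with payoff U(p,m) = (m + p(1−α))R/D − (c·exp(−p) if p > 0 else 0) − (C if m > 0 else 0) for feasible strategies p, m ≥ 0, p + m ≤ B. Assume C ≠ BαR/D + c·exp(−B) and max(U(B,0), U(0,B)) > 0. Then the stakeholder's utility has a unique maximizer over the feasible set: it is (B,0) if C > BαR/D + c·exp(−B) and (0,B) if C < BαR/D + c·exp(−B). (Theorem 4: given a strategy of the leader, every follower has a unique optimal strategy.) -/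
/-!
Writing `r = R / D`, self-mining any `m > 0` earns at most `(p + m) r - C ≤ B r - C = U 0 B`,
strictly less unless `(p, m) = (0, B)`, because delegated stake earns the smaller rate
`(1 - α) r` and pays the positive pool cost. Along `m = 0` the payoff
`p (1 - α) r - c e^{-p}` is strictly increasing, so it is beaten by `U B 0`, and `U 0 0 = 0` is
beaten by the positive larger corner. Hence every feasible point other than the two corners
lies strictly below the better corner, and `U B 0 - U 0 B = C - (B α R / D + c e^{-B})` decides
which corner that is.
-/

open Real Set

section Maximizer

variable {X β : Type*} {S : Set X} {f : X → β} {a b : X}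

theorem existsUnique_maximizer_of_forall_ne_lt [Preorder β] (ha : a ∈ S)
    (h : ∀ x ∈ S, x ≠ a → f x < f a) : ∃! x, x ∈ S ∧ ∀ y ∈ S, f y ≤ f x := by
  refine ⟨a, ⟨ha, fun y hy => ?_⟩, fun x ⟨hx, hmax⟩ => ?_⟩
  · by_cases hya : y = a
    · rw [hya]
    · exact (h y hy hya).le
  · by_contra hxa
    exact (h x hx hxa).not_ge (hmax a ha)

theorem forall_ne_lt_of_lt_max [LinearOrder β] (hba : f b < f a)
    (h : ∀ x ∈ S, x ≠ a → x ≠ b → f x < max (f a) (f b)) :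
    ∀ x ∈ S, x ≠ a → f x < f a := by
  intro x hx hxa
  by_cases hxb : x = b
  · rwa [hxb]
  · simpa [max_eq_left hba.le] using h x hx hxa hxb

end Maximizer

/-- The payoff `U`, with `r` standing for the reward rate `R / D`. -/
noncomputable def stakePayoff (α c C r p m : ℝ) : ℝ :=
  (m + p * (1 - α)) * r - (if 0 < p then c * exp (-p) else 0) - (if 0 < m then C else 0)

section StakePayoff

variable {α c C r p m B : ℝ}

theorem stakePayoff_pool_strictMonoOn (hr : 0 ≤ r) (hα : α ≤ 1) (hc : 0 < c) :
    StrictMonoOn (fun p => stakePayoff α c C r p 0) (Ioi 0) := by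
  intro p hp q hq hpq
  simp only [stakePayoff, if_pos (mem_Ioi.1 hp), if_pos (mem_Ioi.1 hq), lt_irrefl, if_false]
  have hcost : c * exp (-q) < c * exp (-p) := by gcongr
  have hgain : p * (1 - α) * r ≤ q * (1 - α) * r := by gcongr
  linarith

theorem stakePayoff_lt_solo (hr : 0 < r) (hα : 0 ≤ α) (hc : 0 < c) (hp : 0 ≤ p) (hm : 0 < m)
    (hpm : p + m ≤ B) (hne : (p, m) ≠ (0, B)) :
    stakePayoff α c C r p m < stakePayoff α c C r 0 B := by
  have hB : 0 < B := by linarith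
  rcases hp.eq_or_lt with rfl | hp
  · have hmB : m < B := lt_of_le_of_ne (by linarith) fun h => hne (by rw [h])
    simp only [stakePayoff, if_pos hm, if_pos hB, lt_irrefl, if_false]
    gcongr
  · simp only [stakePayoff, if_pos hp, if_pos hm, if_pos hB, lt_irrefl, if_false]
    have hcost : 0 < c * exp (-p) := by positivity
    have hgain : (m + p * (1 - α)) * r ≤ (B + 0 * (1 - α)) * r :=
      mul_le_mul_of_nonneg_right (by nlinarith) hr.le
    linarith

theorem stakePayoff_lt_max_corners (hr : 0 < r) (hα0 : 0 ≤ α) (hα1 : α ≤ 1) (hc : 0 < c)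
    (hpos : 0 < max (stakePayoff α c C r B 0) (stakePayoff α c C r 0 B))
    (hp : 0 ≤ p) (hm : 0 ≤ m) (hpm : p + m ≤ B)
    (hB0 : (p, m) ≠ (B, 0)) (h0B : (p, m) ≠ (0, B)) :
    stakePayoff α c C r p m < max (stakePayoff α c C r B 0) (stakePayoff α c C r 0 B) := by
  rcases hm.eq_or_lt with rfl | hm
  · rcases hp.eq_or_lt with rfl | hp
    · simpa [stakePayoff] using hpos
    · have hpB : p < B := lt_of_le_of_ne (by linarith) fun h => hB0 (by rw [h])
      exact ((stakePayoff_pool_strictMonoOn hr.le hα1 hc) hp (hp.trans hpB) hpB).trans_le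
        (le_max_left _ _)
  · exact (stakePayoff_lt_solo hr hα0 hc hp hm hpm h0B).trans_le (le_max_right _ _)

end StakePayoff

theorem stake_pool_unique_best_response_general
    (D R α c C B : ℝ) (hD : 0 < D) (hR : 0 < R) (hα0 : 0 ≤ α) (hα1 : α ≤ 1)
    (hc : 0 < c) (hB : 0 < B)
    (U : ℝ → ℝ → ℝ)
    (hU : ∀ p m, U p m = (m + p * (1 - α)) * R / D -
        (if 0 < p then c * Real.exp (-p) else 0) - (if 0 < m then C else 0))
    (hne : C ≠ B * α * R / D + c * Real.exp (-B))
    (hpos : max (U B 0) (U 0 B) > 0) :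
    (∃! q : ℝ × ℝ, (0 ≤ q.1 ∧ 0 ≤ q.2 ∧ q.1 + q.2 ≤ B) ∧
        ∀ p m : ℝ, 0 ≤ p → 0 ≤ m → p + m ≤ B → U p m ≤ U q.1 q.2) ∧
    (C > B * α * R / D + c * Real.exp (-B) →
      ∀ p m : ℝ, 0 ≤ p → 0 ≤ m → p + m ≤ B → (p, m) ≠ (B, 0) → U p m < U B 0) ∧
    (C < B * α * R / D + c * Real.exp (-B) →
      ∀ p m : ℝ, 0 ≤ p → 0 ≤ m → p + m ≤ B → (p, m) ≠ (0, B) → U p m < U 0 B) := by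
  obtain rfl : U = stakePayoff α c C (R / D) :=
    funext₂ fun p m => by rw [hU, stakePayoff, mul_div_assoc]
  set S : Set (ℝ × ℝ) := {q | 0 ≤ q.1 ∧ 0 ≤ q.2 ∧ q.1 + q.2 ≤ B}
  set f : ℝ × ℝ → ℝ := fun q => stakePayoff α c C (R / D) q.1 q.2
  have hlt : ∀ q ∈ S, q ≠ (B, 0) → q ≠ (0, B) → f q < max (f (B, 0)) (f (0, B)) :=
    fun _ ⟨hp, hm, hpm⟩ =>
      stakePayoff_lt_max_corners (div_pos hR hD) hα0 hα1 hc hpos hp hm hpm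
  have hdiff : f (B, 0) - f (0, B) = C - (B * α * R / D + c * exp (-B)) := by
    simp only [f, stakePayoff, if_pos hB, lt_irrefl, if_false]; ring
  have hwins : ∀ a ∈ S, (∀ q ∈ S, q ≠ a → f q < f a) →
      (∃! q, q ∈ S ∧ ∀ p m, 0 ≤ p → 0 ≤ m → p + m ≤ B → f (p, m) ≤ f q) := by
    intro a ha h
    simpa only [Prod.forall, S, mem_ofPred_eq, and_imp] using
      existsUnique_maximizer_of_forall_ne_lt ha h
  rcases hne.lt_or_gt with h | h
  · have h0B : ∀ q ∈ S, q ≠ (0, B) → f q < f (0, B) :=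
      forall_ne_lt_of_lt_max (by linarith) fun q hq h0B hB0 =>
        max_comm (f (B, 0)) _ ▸ hlt q hq hB0 h0B
    exact ⟨hwins _ ⟨le_rfl, hB.le, by simp⟩ h0B, fun h' => absurd h' h.not_gt,
      fun _ p m hp hm hpm => h0B (p, m) ⟨hp, hm, hpm⟩⟩
  · have hB0 : ∀ q ∈ S, q ≠ (B, 0) → f q < f (B, 0) :=
      forall_ne_lt_of_lt_max (by linarith) hlt
    exact ⟨hwins _ ⟨hB.le, le_rfl, by simp⟩ hB0,
      fun _ p m hp hm hpm => hB0 (p, m) ⟨hp, hm, hpm⟩, fun h' => absurd h' h.not_gt⟩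

/-- Theorem 4: with fixed total network stake `D > 0`, block reward `R > 0`,
pool fee `α ∈ [0,1]`, pool cost parameter `c > 0`, self-mining operational cost
`C > 0`, budget `B > 0`, and payoff
`U p m = (m + p * (1 - α)) * R / D - (if 0 < p then c * exp (-p) else 0)
        - (if 0 < m then C else 0)`
over feasible strategies (`p, m ≥ 0`, `p + m ≤ B`), assume
`C ≠ B * α * R / D + c * exp (-B)` and `max (U B 0) (U 0 B) > 0`.
Then the stakeholder's utility has a unique maximizer over the feasible set;
moreover it is `(B, 0)` if `C > B * α * R / D + c * exp (-B)` and `(0, B)` if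
`C < B * α * R / D + c * exp (-B)`. -/
theorem stake_pool_unique_best_response
    (D R α c C B : ℝ) (hD : 0 < D) (hR : 0 < R) (hα0 : 0 ≤ α) (hα1 : α ≤ 1)
    (hc : 0 < c) (hC : 0 < C) (hB : 0 < B)
    (U : ℝ → ℝ → ℝ)
    (hU : ∀ p m, U p m = (m + p * (1 - α)) * R / D -
        (if 0 < p then c * Real.exp (-p) else 0) - (if 0 < m then C else 0))
    (hne : C ≠ B * α * R / D + c * Real.exp (-B))
    (hpos : max (U B 0) (U 0 B) > 0) :
    (∃! q : ℝ × ℝ, (0 ≤ q.1 ∧ 0 ≤ q.2 ∧ q.1 + q.2 ≤ B) ∧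
        ∀ p m : ℝ, 0 ≤ p → 0 ≤ m → p + m ≤ B → U p m ≤ U q.1 q.2) ∧
    (C > B * α * R / D + c * Real.exp (-B) →
      ∀ p m : ℝ, 0 ≤ p → 0 ≤ m → p + m ≤ B → (p, m) ≠ (B, 0) → U p m < U B 0) ∧
    (C < B * α * R / D + c * Real.exp (-B) →
      ∀ p m : ℝ, 0 ≤ p → 0 ≤ m → p + m ≤ B → (p, m) ≠ (0, B) → U p m < U 0 B) :=
  stake_pool_unique_best_response_general D R α c C B hD hR hα0 hα1 hc hB U hU hne hpos
end

section
/- Let D > 0 be the (fixed) total network stake, R > 0 the block reward, α ∈ [0,1] the pool fee, c > 0 the pool cost parameter, C > 0 the self-mining operational cost, and B > 0 the stakeholder's budget, with payoff U(p,m) = (m + p(1−α))R/D − (c·exp(−p) if p > 0 else 0) − (C if m > 0 else 0) for feasible strategies p, m ≥ 0, p + m ≤ B. If both full-budget payoffs are negative, i.e., U(B,0) < 0 and U(0,B) < 0, then abstaining is strictly optimal: U(0,0) = 0 > U(p,m) for every feasible (p,m) ≠ (0,0). (Case 4: a stakeholder with negative rewards in both cases does not participate in the consensus process.) -/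
/-!
Both the pool stake and the self-mined stake earn a reward linear in the amount, minus a cost
paid only when the amount is positive and that does not grow with it (`c * exp (-p)` resp. `C`).
On `(0, B]` each of these two payoffs is therefore nondecreasing, so it is bounded by its value
at the full budget `B`, which is negative by hypothesis. The total payoff is the sum of the two,
and for `(p, m) ≠ (0, 0)` one of them is negative while the other is nonpositive.
-/

open Set

noncomputable def entryPayoff (a : ℝ) (k : ℝ → ℝ) (x : ℝ) : ℝ :=
  a * x - if 0 < x then k x else 0

namespace entryPayoff

variable {a B x : ℝ} {k : ℝ → ℝ}

@[simp]
lemma zero (a : ℝ) (k : ℝ → ℝ) : entryPayoff a k 0 = 0 := by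
  simp [entryPayoff]

lemma le_of_le (ha : 0 ≤ a) (hk : AntitoneOn k (Ioi 0)) (hx : 0 < x) (hxB : x ≤ B) :
    entryPayoff a k x ≤ entryPayoff a k B := by
  have hB : 0 < B := hx.trans_le hxB
  simp only [entryPayoff, if_pos hx, if_pos hB]
  have hkx : k B ≤ k x := hk hx hB hxB
  nlinarith [mul_le_mul_of_nonneg_left hxB ha]

lemma neg (ha : 0 ≤ a) (hk : AntitoneOn k (Ioi 0)) (hB : entryPayoff a k B < 0)
    (hx : 0 < x) (hxB : x ≤ B) : entryPayoff a k x < 0 :=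
  (le_of_le ha hk hx hxB).trans_lt hB

lemma nonpos (ha : 0 ≤ a) (hk : AntitoneOn k (Ioi 0)) (hB : entryPayoff a k B < 0)
    (hx : 0 ≤ x) (hxB : x ≤ B) : entryPayoff a k x ≤ 0 := by
  rcases hx.eq_or_lt with rfl | hx
  · simp
  · exact (neg ha hk hB hx hxB).le

end entryPayoff

lemma antitoneOn_const_mul_exp_neg {c : ℝ} (hc : 0 ≤ c) (s : Set ℝ) :
    AntitoneOn (fun p => c * Real.exp (-p)) s :=
  fun _ _ _ _ hxy => mul_le_mul_of_nonneg_left (Real.exp_le_exp.mpr (neg_le_neg hxy)) hc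

theorem stake_pool_nonparticipation_optimal_general
    (D R α c C B : ℝ) (hD : 0 < D) (hR : 0 < R) (hα1 : α ≤ 1)
    (hc : 0 < c)
    (U : ℝ → ℝ → ℝ)
    (hU : ∀ p m, U p m = (m + p * (1 - α)) * R / D -
        (if 0 < p then c * Real.exp (-p) else 0) - (if 0 < m then C else 0))
    (hpool : U B 0 < 0) (hmine : U 0 B < 0) :
    U 0 0 = 0 ∧
      ∀ p m : ℝ, 0 ≤ p → 0 ≤ m → p + m ≤ B → (p, m) ≠ (0, 0) → 0 > U p m := by
  set poolPayoff := entryPayoff ((1 - α) * R / D) (fun p => c * Real.exp (-p))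
  set minePayoff := entryPayoff (R / D) (fun _ => C)
  have hsplit : ∀ p m, U p m = poolPayoff p + minePayoff m := by
    intro p m
    simp only [hU, poolPayoff, minePayoff, entryPayoff]
    ring
  have hpoolRate : 0 ≤ (1 - α) * R / D := by have := sub_nonneg.mpr hα1; positivity
  have hmineRate : 0 ≤ R / D := by positivity
  have hpoolCost := antitoneOn_const_mul_exp_neg hc.le (Ioi 0)
  have hmineCost : AntitoneOn (fun _ : ℝ => C) (Ioi 0) := antitoneOn_const
  replace hpool : poolPayoff B < 0 := by simpa [hsplit, minePayoff] using hpool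
  replace hmine : minePayoff B < 0 := by simpa [hsplit, poolPayoff] using hmine
  refine ⟨by simp [hsplit, poolPayoff, minePayoff], fun p m hp hm hpm hne => ?_⟩
  have hpB : p ≤ B := by linarith
  have hmB : m ≤ B := by linarith
  have hpool_le := entryPayoff.nonpos hpoolRate hpoolCost hpool hp hpB
  have hmine_le := entryPayoff.nonpos hmineRate hmineCost hmine hm hmB
  rw [hsplit]
  rcases hp.eq_or_lt with rfl | hp
  · have hm : 0 < m := hm.lt_of_ne (fun h => hne (by rw [← h]))
    linarith [entryPayoff.neg hmineRate hmineCost hmine hm hmB]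
  · linarith [entryPayoff.neg hpoolRate hpoolCost hpool hp hpB]

/-- Case 4: with fixed total network stake `D > 0`, block reward `R > 0`,
pool fee `α ∈ [0,1]`, pool cost parameter `c > 0`, self-mining operational cost
`C > 0`, budget `B > 0`, and payoff
`U p m = (m + p * (1 - α)) * R / D - (if 0 < p then c * exp (-p) else 0)
        - (if 0 < m then C else 0)`
over feasible strategies (`p, m ≥ 0`, `p + m ≤ B`): if both full-budget payoffs are
negative, `U B 0 < 0` and `U 0 B < 0`, then abstaining is strictly optimal:
`U 0 0 = 0` and `0 > U p m` for every feasible `(p, m) ≠ (0, 0)`. -/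
theorem stake_pool_nonparticipation_optimal
    (D R α c C B : ℝ) (hD : 0 < D) (hR : 0 < R) (hα0 : 0 ≤ α) (hα1 : α ≤ 1)
    (hc : 0 < c) (hC : 0 < C) (hB : 0 < B)
    (U : ℝ → ℝ → ℝ)
    (hU : ∀ p m, U p m = (m + p * (1 - α)) * R / D -
        (if 0 < p then c * Real.exp (-p) else 0) - (if 0 < m then C else 0))
    (hpool : U B 0 < 0) (hmine : U 0 B < 0) :
    U 0 0 = 0 ∧
      ∀ p m : ℝ, 0 ≤ p → 0 ≤ m → p + m ≤ B → (p, m) ≠ (0, 0) → 0 > U p m :=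
  stake_pool_nonparticipation_optimal_general D R α c C B hD hR hα1 hc U hU hpool hmine
end

section
/- Consider the leader's Mixed-Integer Programming problem: given N ≥ 1 followers with budgets B_i > 0 and operational costs C_i > 0, block reward R > 0, total stake T > 0, and constant L ≥ 0, maximize Σ_{i=1}^N x_i·(B_i R α / T + c·exp(−B_i)) over α ≥ 0, c ≥ 0, and x_i ∈ {0,1}, subject to B_i R α / T + c·exp(−B_i) ≤ L(1 − x_i) + C_i for all i. Then this problem attains its maximum: there exists a feasible (α*, c*, x*) whose objective value is at least that of every feasible point. (Theorem 5: there exists at least one Stackelberg equilibrium, i.e., at least one optimal leader strategy.) -/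
/-!
The feasible set is closed and the profit is continuous, but the fee `α` and the cost `c` are
unbounded on it. They are bounded as soon as one follower invests: its constraint reads
`B i R α / T + c e^{-B i} ≤ C i`, so `α ≤ C i T / (B i R)` and `c ≤ C i e^{B i}`. If nobody
invests, the profit is `0`, its value at the feasible origin. Hence outside a compact box the
profit never exceeds its value at a feasible point, and the extreme value theorem applies.
-/

open Finset

noncomputable section

namespace StakePool

open Set Filter

def charge {ι : Type*} (B : ι → ℝ) (R T : ℝ) (i : ι) (α c : ℝ) : ℝ :=
  B i * R * α / T + c * Real.exp (-B i)

/-- Points are triples `(α, c, x)`. -/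
def feasibleSet {ι : Type*} (B C : ι → ℝ) (R T L : ℝ) : Set (ℝ × ℝ × (ι → ℝ)) :=
  {p | 0 ≤ p.1 ∧ 0 ≤ p.2.1 ∧ (∀ i, p.2.2 i = 0 ∨ p.2.2 i = 1) ∧
    ∀ i, charge B R T i p.1 p.2.1 ≤ L * (1 - p.2.2 i) + C i}

def profit {ι : Type*} [Fintype ι] (B : ι → ℝ) (R T : ℝ)
    (p : ℝ × ℝ × (ι → ℝ)) : ℝ :=
  ∑ i, p.2.2 i * charge B R T i p.1 p.2.1

def bound {ι : Type*} [Fintype ι] (B C : ι → ℝ) (R T : ℝ) : ℝ × ℝ × (ι → ℝ) :=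
  (∑ j, C j * T / (B j * R), ∑ j, C j * Real.exp (B j), 1)

variable {ι : Type*} {B C : ι → ℝ} {R T L : ℝ}

theorem isClosed_feasibleSet : IsClosed (feasibleSet B C R T L) := by
  simp only [feasibleSet, charge, ofPred_and, ofPred_forall, ofPred_or]
  refine (isClosed_le ?_ ?_).inter ((isClosed_le ?_ ?_).inter
    ((isClosed_iInter fun i => (isClosed_eq ?_ ?_).union (isClosed_eq ?_ ?_)).inter
      (isClosed_iInter fun i => isClosed_le ?_ ?_))) <;> fun_prop

theorem zero_mem_feasibleSet (hC : ∀ i, 0 ≤ C i) (hL : 0 ≤ L) :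
    0 ∈ feasibleSet B C R T L := by
  refine ⟨le_rfl, le_rfl, fun _ => Or.inl rfl, fun i => ?_⟩
  simpa [charge] using add_nonneg hL (hC i)

theorem fee_le_of_charge_le {i : ι} {α c b : ℝ} (hB : 0 < B i) (hR : 0 < R) (hT : 0 < T)
    (hc : 0 ≤ c) (h : charge B R T i α c ≤ b) : α ≤ b * T / (B i * R) := by
  have hcharge : B i * R * α / T ≤ b := by
    unfold charge at h
    nlinarith [mul_nonneg hc (Real.exp_pos (-B i)).le]
  rw [div_le_iff₀ hT] at hcharge
  rw [le_div_iff₀ (mul_pos hB hR)]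
  linarith

theorem cost_le_of_charge_le {i : ι} {α c b : ℝ} (hB : 0 ≤ B i) (hR : 0 ≤ R) (hT : 0 ≤ T)
    (hα : 0 ≤ α) (h : charge B R T i α c ≤ b) : c ≤ b * Real.exp (B i) := by
  have hcharge : c * Real.exp (-B i) ≤ b := by
    unfold charge at h
    have : 0 ≤ B i * R * α / T := by positivity
    linarith
  rwa [Real.exp_neg, ← div_eq_mul_inv, div_le_iff₀ (Real.exp_pos _)] at hcharge

variable [Fintype ι]

theorem continuous_profit : Continuous (profit B R T) := by
  unfold profit charge
  fun_prop

theorem profit_zero : profit B R T 0 = 0 := by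
  simp [profit]

theorem mem_Icc_bound_of_invests (hB : ∀ i, 0 < B i) (hC : ∀ i, 0 ≤ C i) (hR : 0 < R)
    (hT : 0 < T) {p : ℝ × ℝ × (ι → ℝ)} (hp : p ∈ feasibleSet B C R T L) {i : ι}
    (hi : p.2.2 i = 1) : p ∈ Icc 0 (bound B C R T) := by
  obtain ⟨hα, hc, hx, hcharge⟩ := hp
  have hle : charge B R T i p.1 p.2.1 ≤ C i := by simpa [hi] using hcharge i
  refine ⟨⟨hα, hc, fun j => ?_⟩, ⟨?_, ?_, fun j => ?_⟩⟩
  · rcases hx j with h | h <;> simp [h]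
  · calc p.1 ≤ C i * T / (B i * R) := fee_le_of_charge_le (hB i) hR hT hc hle
      _ ≤ _ := single_le_sum (f := fun j => C j * T / (B j * R))
          (fun j _ => by have := hB j; have := hC j; positivity) (mem_univ i)
  · calc p.2.1 ≤ C i * Real.exp (B i) := cost_le_of_charge_le (hB i).le hR.le hT.le hα hle
      _ ≤ _ := single_le_sum (f := fun j => C j * Real.exp (B j))
          (fun j _ => by have := hC j; positivity) (mem_univ i)
  · rcases hx j with h | h <;> simp [bound, h]

theorem profit_eq_zero_of_notMem_Icc_bound (hB : ∀ i, 0 < B i) (hC : ∀ i, 0 ≤ C i)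
    (hR : 0 < R) (hT : 0 < T) {p : ℝ × ℝ × (ι → ℝ)} (hp : p ∈ feasibleSet B C R T L)
    (hpK : p ∉ Icc 0 (bound B C R T)) : profit B R T p = 0 := by
  refine sum_eq_zero fun i _ => ?_
  have hi : p.2.2 i = 0 :=
    (hp.2.2.1 i).resolve_right fun hi => hpK (mem_Icc_bound_of_invests hB hC hR hT hp hi)
  simp [hi]

theorem exists_isMaxOn_profit (hB : ∀ i, 0 < B i) (hC : ∀ i, 0 ≤ C i) (hR : 0 < R)
    (hT : 0 < T) (hL : 0 ≤ L) :
    ∃ p ∈ feasibleSet B C R T L, IsMaxOn (profit B R T) (feasibleSet B C R T L) p := by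
  refine continuous_profit.continuousOn.exists_isMaxOn' isClosed_feasibleSet
    (zero_mem_feasibleSet hC hL) ((hasBasis_cocompact.inf_principal _).eventually_iff.2
      ⟨Icc 0 (bound B C R T), isCompact_Icc, fun p ⟨hpK, hp⟩ => ?_⟩)
  rw [profit_eq_zero_of_notMem_Icc_bound hB hC hR hT hp hpK, profit_zero]

end StakePool

end

theorem stake_pool_leader_MIP_attains_maximum_general
    (N : ℕ) (B C : Fin N → ℝ)
    (hB : ∀ i, 0 < B i) (hC : ∀ i, 0 < C i)
    (R T L : ℝ) (hR : 0 < R) (hT : 0 < T) (hL : 0 ≤ L) :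
    ∃ α c : ℝ, ∃ x : Fin N → ℝ,
      (0 ≤ α ∧ 0 ≤ c ∧ (∀ i, x i = 0 ∨ x i = 1) ∧
        (∀ i, B i * R * α / T + c * Real.exp (-B i) ≤ L * (1 - x i) + C i)) ∧
      ∀ α' c' : ℝ, ∀ x' : Fin N → ℝ,
        (0 ≤ α' ∧ 0 ≤ c' ∧ (∀ i, x' i = 0 ∨ x' i = 1) ∧
          (∀ i, B i * R * α' / T + c' * Real.exp (-B i) ≤ L * (1 - x' i) + C i)) →
        ∑ i, x' i * (B i * R * α' / T + c' * Real.exp (-B i)) ≤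
          ∑ i, x i * (B i * R * α / T + c * Real.exp (-B i)) := by
  obtain ⟨⟨α, c, x⟩, hp, hmax⟩ :=
    StakePool.exists_isMaxOn_profit hB (fun i => (hC i).le) hR hT hL
  exact ⟨α, c, x, hp, fun α' c' x' hp' => hmax (a := (α', c', x')) hp'⟩

/-- Theorem 5 (existence of an optimal leader strategy): the leader's
Mixed-Integer Program — maximize `∑ i, x i * (B i * R * α / T + c * exp (-B i))`
over `α ≥ 0`, `c ≥ 0` and binary `x i ∈ {0, 1}`, subject to
`B i * R * α / T + c * exp (-B i) ≤ L * (1 - x i) + C i` for all `i` —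
attains its maximum: there is a feasible point whose objective value is at least
the objective value of every feasible point. -/
theorem stake_pool_leader_MIP_attains_maximum
    (N : ℕ) (hN : 1 ≤ N) (B C : Fin N → ℝ)
    (hB : ∀ i, 0 < B i) (hC : ∀ i, 0 < C i)
    (R T L : ℝ) (hR : 0 < R) (hT : 0 < T) (hL : 0 ≤ L) :
    ∃ α c : ℝ, ∃ x : Fin N → ℝ,
      (0 ≤ α ∧ 0 ≤ c ∧ (∀ i, x i = 0 ∨ x i = 1) ∧
        (∀ i, B i * R * α / T + c * Real.exp (-B i) ≤ L * (1 - x i) + C i)) ∧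
      ∀ α' c' : ℝ, ∀ x' : Fin N → ℝ,
        (0 ≤ α' ∧ 0 ≤ c' ∧ (∀ i, x' i = 0 ∨ x' i = 1) ∧
          (∀ i, B i * R * α' / T + c' * Real.exp (-B i) ≤ L * (1 - x' i) + C i)) →
        ∑ i, x' i * (B i * R * α' / T + c' * Real.exp (-B i)) ≤
          ∑ i, x i * (B i * R * α / T + c * Real.exp (-B i)) :=
  stake_pool_leader_MIP_attains_maximum_general N B C hB hC R T L hR hT hL
end
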